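/- For all u, v ∈ H = ℓ²(ℂ), the sabra shell model bilinear operator satisfies ‖B(u,v)‖_{V'} ≤ C₁ |u| |v|, where V' = D(A^{-1/2}) is the dual of V. -/

import Mathlib

open scoped BigOperators

/-- Wave numbers `kₙ = k₀ λⁿ`. -/
noncomputable def kk (k0 lam : ℝ) (n : ℤ) : ℝ := k0 * lam ^ n

/-- The sabra shell model bilinear operator `B(u,v)ₙ`. -/
noncomputable def sabraB (a b k0 lam : ℝ) (u v : ℤ → ℂ) (n : ℤ) : ℂ :=
  if 1 ≤ n then
    -Complex.I *
      ((a : ℂ) * (kk k0 lam (n + 1) : ℂ) * v (n + 2) * (starRingEnd ℂ) (u (n + 1))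
        + (b : ℂ) * (kk k0 lam n : ℂ) * v (n + 1) * (starRingEnd ℂ) (u (n - 1))
        + (a : ℂ) * (kk k0 lam (n - 1) : ℂ) * u (n - 1) * v (n - 2)
        + (b : ℂ) * (kk k0 lam (n - 1) : ℂ) * v (n - 1) * u (n - 2))
  else 0

/-!
Since `k_{n±1} = kₙ λ^{±1}`, dividing `B(u,v)ₙ` by `kₙ` leaves four terms of the form
`c ‖u_{n+s}‖ ‖v_{n+t}‖` with `c ∈ {|a|λ, |b|, |a|λ⁻¹, |b|λ⁻¹}`. Each such sequence has `ℓ²` norm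
at most `c |u| |v|`: bound `‖u_{n+s}‖` by the sup norm `≤ |u|` and keep the shifted `v` in `ℓ²`.
Minkowski's inequality adds the four bounds up to `C₁ |u| |v|`.
-/

open Real

section SquareSummable

variable {ι : Type*}

theorem summable_sq_add_and_sqrt_tsum_le {f g : ι → ℝ} (hf0 : ∀ i, 0 ≤ f i) (hg0 : ∀ i, 0 ≤ g i)
    {A B : ℝ} (hf : Summable fun i => f i ^ 2) (hg : Summable fun i => g i ^ 2)
    (hA : √(∑' i, f i ^ 2) ≤ A) (hB : √(∑' i, g i ^ 2) ≤ B) :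
    Summable (fun i => (f i + g i) ^ 2) ∧ √(∑' i, (f i + g i) ^ 2) ≤ A + B := by
  obtain ⟨hfg, hle⟩ := Lp_add_le_tsum_of_nonneg (p := 2) one_le_two hf0 hg0
    (by simpa only [rpow_two]) (by simpa only [rpow_two])
  simp only [rpow_two, ← sqrt_eq_rpow] at hfg hle
  exact ⟨hfg, hle.trans (add_le_add hA hB)⟩

theorem summable_sq_mul_and_sqrt_tsum_le {f g : ι → ℝ} {M : ℝ} (hM0 : 0 ≤ M)
    (hM : ∀ i, |f i| ≤ M) (hg : Summable fun i => g i ^ 2) :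
    Summable (fun i => (f i * g i) ^ 2) ∧ √(∑' i, (f i * g i) ^ 2) ≤ M * √(∑' i, g i ^ 2) := by
  have hle : ∀ i, (f i * g i) ^ 2 ≤ M ^ 2 * g i ^ 2 := fun i => by
    rw [mul_pow, ← sq_abs (f i)]
    gcongr
    exact hM i
  have hfg : Summable fun i => (f i * g i) ^ 2 :=
    hg.mul_left _ |>.of_nonneg_of_le (fun i => sq_nonneg _) hle
  refine ⟨hfg, ?_⟩
  calc √(∑' i, (f i * g i) ^ 2) ≤ √(M ^ 2 * ∑' i, g i ^ 2) := by
        rw [← tsum_mul_left]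
        exact sqrt_le_sqrt (hfg.tsum_le_tsum hle (hg.mul_left _))
    _ = M * √(∑' i, g i ^ 2) := by rw [sqrt_mul (sq_nonneg M), sqrt_sq hM0]

theorem summable_sq_and_sqrt_tsum_le_of_le {f g : ι → ℝ} {A : ℝ} (hf0 : ∀ i, 0 ≤ f i)
    (hfg : ∀ i, f i ≤ g i) (hg : Summable fun i => g i ^ 2) (hA : √(∑' i, g i ^ 2) ≤ A) :
    Summable (fun i => f i ^ 2) ∧ √(∑' i, f i ^ 2) ≤ A := by
  have hle : ∀ i, f i ^ 2 ≤ g i ^ 2 := fun i => pow_le_pow_left₀ (hf0 i) (hfg i) 2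
  have hf : Summable fun i => f i ^ 2 := hg.of_nonneg_of_le (fun i => sq_nonneg _) hle
  exact ⟨hf, (sqrt_le_sqrt (hf.tsum_le_tsum hle hg)).trans hA⟩

variable {E : Type*} [SeminormedAddCommGroup E]

theorem norm_le_sqrt_tsum_norm_sq {u : ι → E} (hu : Summable fun i => ‖u i‖ ^ 2) (i : ι) :
    ‖u i‖ ≤ √(∑' j, ‖u j‖ ^ 2) :=
  le_sqrt_of_sq_le (hu.le_tsum i fun _ _ => sq_nonneg _)

theorem summable_sq_norm_mul_and_sqrt_tsum_le {c : ℝ} (hc : 0 ≤ c) {u v : ι → E}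
    (σ : ι → ι) (τ : ι ≃ ι)
    (hu : Summable fun i => ‖u i‖ ^ 2) (hv : Summable fun i => ‖v i‖ ^ 2) :
    Summable (fun i => (c * ‖u (σ i)‖ * ‖v (τ i)‖) ^ 2) ∧
      √(∑' i, (c * ‖u (σ i)‖ * ‖v (τ i)‖) ^ 2) ≤
        c * √(∑' i, ‖u i‖ ^ 2) * √(∑' i, ‖v i‖ ^ 2) := by
  have hvτ : Summable fun i => ‖v (τ i)‖ ^ 2 := (τ.summable_iff.2 hv :)
  have hM : ∀ i, |c * ‖u (σ i)‖| ≤ c * √(∑' i, ‖u i‖ ^ 2) := fun i => by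
    rw [abs_of_nonneg (by positivity)]
    exact mul_le_mul_of_nonneg_left (norm_le_sqrt_tsum_norm_sq hu (σ i)) hc
  have hbound := summable_sq_mul_and_sqrt_tsum_le (by positivity) hM hvτ
  rwa [τ.tsum_eq (fun i => ‖v i‖ ^ 2)] at hbound

end SquareSummable

section Sabra

variable {k0 lam : ℝ}

theorem kk_pos (hk0 : 0 < k0) (hlam : 0 < lam) (n : ℤ) : 0 < kk k0 lam n :=
  mul_pos hk0 (zpow_pos hlam n)

theorem kk_add_one (hlam : lam ≠ 0) (n : ℤ) : kk k0 lam (n + 1) = kk k0 lam n * lam := by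
  rw [kk, kk, zpow_add_one₀ hlam, mul_assoc]

theorem kk_sub_one (hlam : lam ≠ 0) (n : ℤ) : kk k0 lam (n - 1) = kk k0 lam n * lam⁻¹ := by
  rw [kk, kk, zpow_sub_one₀ hlam, mul_assoc]

theorem norm_sabraB_le (a b : ℝ) (hk0 : 0 < k0) (hlam : 0 < lam) (u v : ℤ → ℂ) (n : ℤ) :
    ‖sabraB a b k0 lam u v n‖ ≤ kk k0 lam n *
      (|a| * lam * ‖u (n + 1)‖ * ‖v (n + 2)‖ + (|b| * ‖u (n - 1)‖ * ‖v (n + 1)‖ +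
        (|a| * lam⁻¹ * ‖u (n - 1)‖ * ‖v (n - 2)‖ + |b| * lam⁻¹ * ‖u (n - 2)‖ * ‖v (n - 1)‖))) := by
  have hk := kk_pos hk0 hlam
  rw [sabraB]
  split_ifs
  · rw [norm_mul, norm_neg, Complex.norm_I, one_mul]
    refine norm_add₄_le.trans_eq ?_
    simp only [norm_mul, Complex.norm_real, Complex.norm_conj, Real.norm_eq_abs,
      abs_of_pos (hk _), abs_of_pos hlam, abs_inv, kk_add_one hlam.ne', kk_sub_one hlam.ne']
    ring
  · rw [norm_zero]
    exact mul_nonneg (hk n).le (by positivity)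

end Sabra

theorem sabraB_H_H_dual_bound_general (a b k0 lam : ℝ) (hk0 : 0 < k0) (hlam : 1 < lam)
    (u v : ℤ → ℂ)
    (hu : Summable fun n : ℤ => ‖u n‖ ^ 2)
    (hv : Summable fun n : ℤ => ‖v n‖ ^ 2) :
    Summable (fun n : ℤ => ((kk k0 lam n) ^ 2)⁻¹ * ‖sabraB a b k0 lam u v n‖ ^ 2) ∧
      Real.sqrt (∑' n : ℤ, ((kk k0 lam n) ^ 2)⁻¹ * ‖sabraB a b k0 lam u v n‖ ^ 2) ≤
        (|a| * (lam⁻¹ + lam) + |b| * (lam⁻¹ + 1)) *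
          Real.sqrt (∑' n : ℤ, ‖u n‖ ^ 2) *
          Real.sqrt (∑' n : ℤ, ‖v n‖ ^ 2) := by
  have hlam0 : 0 < lam := one_pos.trans hlam
  have h₁ := summable_sq_norm_mul_and_sqrt_tsum_le (c := |a| * lam) (by positivity)
    (· + 1) (Equiv.addRight 2) hu hv
  have h₂ := summable_sq_norm_mul_and_sqrt_tsum_le (c := |b|) (by positivity)
    (· - 1) (Equiv.addRight 1) hu hv
  have h₃ := summable_sq_norm_mul_and_sqrt_tsum_le (c := |a| * lam⁻¹) (by positivity)
    (· - 1) (Equiv.subRight 2) hu hv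
  have h₄ := summable_sq_norm_mul_and_sqrt_tsum_le (c := |b| * lam⁻¹) (by positivity)
    (· - 2) (Equiv.subRight 1) hu hv
  have h₃₄ := summable_sq_add_and_sqrt_tsum_le (fun _ => by positivity) (fun _ => by positivity)
    h₃.1 h₄.1 h₃.2 h₄.2
  have h₂₃₄ := summable_sq_add_and_sqrt_tsum_le (fun _ => by positivity) (fun _ => by positivity)
    h₂.1 h₃₄.1 h₂.2 h₃₄.2
  have h₁₂₃₄ := summable_sq_add_and_sqrt_tsum_le (fun _ => by positivity)
    (fun _ => by positivity) h₁.1 h₂₃₄.1 h₁.2 h₂₃₄.2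
  obtain ⟨hsum, hle⟩ := summable_sq_and_sqrt_tsum_le_of_le
    (fun n => mul_nonneg (inv_nonneg.2 (kk_pos hk0 hlam0 n).le) (norm_nonneg _))
    (fun n => (inv_mul_le_iff₀ (kk_pos hk0 hlam0 n)).2 (norm_sabraB_le a b hk0 hlam0 u v n))
    h₁₂₃₄.1 h₁₂₃₄.2
  simp only [mul_pow, inv_pow] at hsum hle
  exact ⟨hsum, hle.trans_eq (by ring)⟩

/-- for `u, v ∈ H`, `‖B(u,v)‖_{V'} ≤ C₁ |u| |v|` with
`C₁ = |a|(λ⁻¹+λ) + |b|(λ⁻¹+1)`, where `‖f‖²_{V'} = Σ kₙ⁻² |fₙ|²`. -/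
theorem sabraB_H_H_dual_bound (a b k0 lam : ℝ) (hk0 : 0 < k0) (hlam : 1 < lam)
    (u v : ℤ → ℂ) (hu0 : ∀ n : ℤ, n ≤ 0 → u n = 0) (hv0 : ∀ n : ℤ, n ≤ 0 → v n = 0)
    (hu : Summable fun n : ℤ => ‖u n‖ ^ 2)
    (hv : Summable fun n : ℤ => ‖v n‖ ^ 2) :
    Summable (fun n : ℤ => ((kk k0 lam n) ^ 2)⁻¹ * ‖sabraB a b k0 lam u v n‖ ^ 2) ∧
      Real.sqrt (∑' n : ℤ, ((kk k0 lam n) ^ 2)⁻¹ * ‖sabraB a b k0 lam u v n‖ ^ 2) ≤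
        (|a| * (lam⁻¹ + lam) + |b| * (lam⁻¹ + 1)) *
          Real.sqrt (∑' n : ℤ, ‖u n‖ ^ 2) *
          Real.sqrt (∑' n : ℤ, ‖v n‖ ^ 2) :=
  sabraB_H_H_dual_bound_general a b k0 lam hk0 hlam u v hu hv
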